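/- Equivalent form of the centre-of-spin condition: Let P ∈ ℝ⁴ be future-directed timelike with mc := √(−η(P,P)), let u ∈ ℝ⁴ be future-directed unit timelike, and let S_{μν} be any antisymmetric tensor on ℝ⁴. Define W_μ := −(1/2) ε_{μνρσ} P^ν S^{ρσ} (indices raised with η) and let B(u) be the boost given by B^μ{}_ν := δ^μ_ν + (P^μ/(mc) + u^μ)(P_ν/(mc) + u_ν)/(1 − η(u,P)/(mc)) − 2 u^μ P_ν/(mc). Then the centre-of-spin condition η_{μν}(B(u)(W^♯/(mc)))^ν = −(1/2) ε_{μνρσ} u^ν S^{ρσ} (for all μ) holds if and only if the 3-form u^♭ ∧ P^♭ ∧ (ι_{u+P/(mc)}S) vanishes, i.e. if and only if the total antisymmetrization over (μ,ν,ρ) of u_μ P_ν S_{ρσ}(u + P/(mc))^σ vanishes for all μ,ν,ρ. -/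

import Mathlib

noncomputable section

open scoped BigOperators

/-- The Minkowski bilinear form on `ℝ⁴`, signature `(-+++)`. -/
def mink (x y : Fin 4 → ℝ) : ℝ := -(x 0 * y 0) + x 1 * y 1 + x 2 * y 2 + x 3 * y 3

/-- Lowering (equivalently raising) an index with `η = diag(-1,1,1,1)`. -/
def low (v : Fin 4 → ℝ) : Fin 4 → ℝ := fun μ => if μ = 0 then -(v μ) else v μ

/-- `v` is future-directed timelike. -/
def FDTimelike (v : Fin 4 → ℝ) : Prop := mink v v < 0 ∧ 0 < v 0

/-- `v` is future-directed unit timelike. -/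
def FDUnitTimelike (v : Fin 4 → ℝ) : Prop := mink v v = -1 ∧ 0 < v 0

/-- `mc := √(−η(P,P))`. -/
def mcOf (P : Fin 4 → ℝ) : ℝ := Real.sqrt (-(mink P P))

/-- The spin tensor `S_{μν}(x) = J_{μν} − x_μ P_ν + x_ν P_μ` about the point `x`. -/
def spinTensor (J : Fin 4 → Fin 4 → ℝ) (P x : Fin 4 → ℝ) : Fin 4 → Fin 4 → ℝ :=
  fun μ ν => J μ ν - low x μ * low P ν + low x ν * low P μ

/-- The spin supplementary condition `S_{μν}(x) f^ν = 0` with respect to `f`. -/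
def SSC (J : Fin 4 → Fin 4 → ℝ) (P x f : Fin 4 → ℝ) : Prop :=
  ∀ μ, ∑ ν, spinTensor J P x μ ν * f ν = 0

/-- Lowered components of the Newton–Wigner position observable. -/
def nwLow (J : Fin 4 → Fin 4 → ℝ) (P u : Fin 4 → ℝ) (τ : ℝ) : Fin 4 → ℝ :=
  fun μ =>
    -(∑ ρ, J μ ρ * (u ρ + P ρ / mcOf P)) / (mcOf P - mink u P)
    + τ * low P μ / (-(mink u P))
    - ((∑ l, ∑ ρ, J l ρ * u l * P ρ) / (mcOf P * (mcOf P - mink u P)))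
        * low P μ / (-(mink u P))

/-- The Newton–Wigner position observable (as a point of `ℝ⁴`). -/
def nw (J : Fin 4 → Fin 4 → ℝ) (P u : Fin 4 → ℝ) (τ : ℝ) : Fin 4 → ℝ :=
  low (nwLow J P u τ)

/-- Sign of an integer, as a real number. -/
def sgnZ (n : ℤ) : ℝ := if 0 < n then 1 else if n < 0 then -1 else 0

/-- The totally antisymmetric symbol `ε_{μνρσ}` with `ε_{0123} = +1`. -/
def eps4 (μ ν ρ σ : Fin 4) : ℝ :=
  sgnZ ((ν.val : ℤ) - (μ.val : ℤ)) * sgnZ ((ρ.val : ℤ) - (μ.val : ℤ)) *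
  sgnZ ((σ.val : ℤ) - (μ.val : ℤ)) * sgnZ ((ρ.val : ℤ) - (ν.val : ℤ)) *
  sgnZ ((σ.val : ℤ) - (ν.val : ℤ)) * sgnZ ((σ.val : ℤ) - (ρ.val : ℤ))

/-- Both indices of a rank-2 tensor raised with `η = diag(-1,1,1,1)`:
`T^{ρσ} = η^{ρα} η^{σβ} T_{αβ}`. -/
def up2 (T : Fin 4 → Fin 4 → ℝ) : Fin 4 → Fin 4 → ℝ :=
  fun ρ σ => (if ρ = 0 then (-1 : ℝ) else 1) * (if σ = 0 then (-1 : ℝ) else 1) * T ρ σ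

/-- Lowered components of the Pauli–Lubański vector built from a rank-2 (spin/angular momentum)
tensor `T`: `W_μ = −(1/2) ε_{μνρσ} P^ν T^{ρσ}`. -/
def plLow (P : Fin 4 → ℝ) (T : Fin 4 → Fin 4 → ℝ) : Fin 4 → ℝ :=
  fun μ => -(1/2) * ∑ ν, ∑ ρ, ∑ σ, eps4 μ ν ρ σ * P ν * up2 T ρ σ

/-- The boost `B(u)` linking the momentum rest frame of `P` to the frame of `u`, in components:
`B^μ{}_ν = δ^μ_ν + (P^μ/(mc)+u^μ)(P_ν/(mc)+u_ν)/(1 − η(u,P)/(mc)) − 2u^μP_ν/(mc)`. -/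
def boostMat (P u : Fin 4 → ℝ) : Fin 4 → Fin 4 → ℝ :=
  fun μ ν =>
    (if μ = ν then (1 : ℝ) else 0)
    + (P μ / mcOf P + u μ) * (low P ν / mcOf P + low u ν) / (1 - mink u P / mcOf P)
    - 2 * u μ * low P ν / mcOf P

/-- Total antisymmetrization of `α_μ β_ν γ_ρ` over `(μ,ν,ρ)`. -/
def alt3 (α β γ : Fin 4 → ℝ) (μ ν ρ : Fin 4) : ℝ :=
  α μ * β ν * γ ρ - α μ * β ρ * γ ν + α ν * β ρ * γ μ
  - α ν * β μ * γ ρ + α ρ * β μ * γ ν - α ρ * β ν * γ μ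

/-!
Write `D(v)_μ := −½ ε_{μνρσ} v^ν S^{ρσ}`, so that `W = D(P)` and `W ⟂ P`. On `x = W^♯/(mc)` the
boost therefore acts as `x ↦ x + (u·x)(u + P/(mc))/(1 − u·P/(mc))`. For antisymmetric `S` and
arbitrary `u, p, w` one has the four-dimensional identity
`ε_{μνρσ} u^ν p^ρ (ι_w S)^σ = (p·w) D(u)_μ − (u·w) D(p)_μ + w_μ (u·D(p))`,
and with `p = P`, `w = u + P/(mc)` its right-hand side is `mc − u·P` times the defect of the
centre-of-spin condition. By the reverse Cauchy–Schwarz inequality `u·P < 0`, so this factor is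
positive, and the left-hand side is the Hodge dual of `u^♭ ∧ P^♭ ∧ ι_w S`, which vanishes iff the
3-form does.
-/

theorem low_low (v : Fin 4 → ℝ) : low (low v) = v := by
  funext μ
  by_cases h : μ = 0 <;> simp [low, h]

theorem mcOf_pos {P : Fin 4 → ℝ} (h : mink P P < 0) : 0 < mcOf P :=
  Real.sqrt_pos.mpr (neg_pos.mpr h)

theorem mink_self_eq_neg_mcOf_sq {P : Fin 4 → ℝ} (h : mink P P ≤ 0) :
    mink P P = -mcOf P ^ 2 := by
  rw [mcOf, Real.sq_sqrt (neg_nonneg.mpr h), neg_neg]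

theorem mink_neg_of_fdTimelike {v w : Fin 4 → ℝ} (hv : FDTimelike v) (hw : FDTimelike w) :
    mink v w < 0 := by
  obtain ⟨hvv, hv0⟩ := hv
  obtain ⟨hww, hw0⟩ := hw
  simp only [mink] at *
  have cauchy_schwarz : (v 1 * w 1 + v 2 * w 2 + v 3 * w 3) ^ 2
      ≤ (v 1 ^ 2 + v 2 ^ 2 + v 3 ^ 2) * (w 1 ^ 2 + w 2 ^ 2 + w 3 ^ 2) := by
    nlinarith [sq_nonneg (v 1 * w 2 - v 2 * w 1), sq_nonneg (v 1 * w 3 - v 3 * w 1),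
      sq_nonneg (v 2 * w 3 - v 3 * w 2)]
  have spatial_lt : (v 1 ^ 2 + v 2 ^ 2 + v 3 ^ 2) * (w 1 ^ 2 + w 2 ^ 2 + w 3 ^ 2)
      < (v 0 * w 0) ^ 2 := by
    rw [mul_pow]
    exact mul_lt_mul'' (by nlinarith) (by nlinarith) (by positivity) (by positivity)
  nlinarith [mul_pos hv0 hw0]

theorem sum_mul_plLow_self (v : Fin 4 → ℝ) (T : Fin 4 → Fin 4 → ℝ) :
    ∑ ν, v ν * plLow v T ν = 0 := by
  simp [plLow, eps4, sgnZ, Fin.sum_univ_four]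
  ring

theorem boostMat_mulVec (P u x : Fin 4 → ℝ) (κ : Fin 4) :
    ∑ ν, boostMat P u κ ν * x ν = x κ
      + (P κ / mcOf P + u κ) * (mink P x / mcOf P + mink u x) / (1 - mink u P / mcOf P)
      - 2 * u κ * mink P x / mcOf P := by
  fin_cases κ <;> simp [boostMat, mink, low, Fin.sum_univ_four] <;> ring

def epsContract (a b c : Fin 4 → ℝ) (μ : Fin 4) : ℝ :=
  ∑ ν, ∑ ρ, ∑ σ, eps4 μ ν ρ σ * a ν * b ρ * c σ

theorem epsContract_low (α β γ : Fin 4 → ℝ) :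
    epsContract (low α) (low β) (low γ) =
      ![alt3 α β γ 1 2 3, alt3 α β γ 0 2 3, -alt3 α β γ 0 1 3, alt3 α β γ 0 1 2] := by
  funext μ
  fin_cases μ <;> simp [epsContract, eps4, sgnZ, Fin.sum_univ_four, low, alt3] <;> ring

theorem alt3_eq_zero_of_complements {α β γ : Fin 4 → ℝ}
    (h₀ : alt3 α β γ 1 2 3 = 0) (h₁ : alt3 α β γ 0 2 3 = 0)
    (h₂ : alt3 α β γ 0 1 3 = 0) (h₃ : alt3 α β γ 0 1 2 = 0) (μ ν ρ : Fin 4) :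
    alt3 α β γ μ ν ρ = 0 := by
  simp only [alt3] at *
  fin_cases μ <;> fin_cases ν <;> fin_cases ρ <;>
    simp only [Fin.zero_eta, Fin.mk_one, Fin.reduceFinMk] <;> linarith

theorem alt3_eq_zero_iff_epsContract_low_eq_zero (α β γ : Fin 4 → ℝ) :
    (∀ μ ν ρ, alt3 α β γ μ ν ρ = 0) ↔ epsContract (low α) (low β) (low γ) = 0 := by
  rw [epsContract_low]
  refine ⟨fun h => by simp [h], fun h => alt3_eq_zero_of_complements ?_ ?_ ?_ ?_⟩
  · simpa using congrFun h 0
  · simpa using congrFun h 1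
  · simpa using congrFun h 2
  · simpa using congrFun h 3

theorem epsContract_low_interior (S : Fin 4 → Fin 4 → ℝ) (hS : ∀ μ ν, S μ ν = -S ν μ)
    (u p w : Fin 4 → ℝ) (μ : Fin 4) :
    epsContract u p (low fun κ => ∑ σ, S κ σ * w σ) μ
      = mink p w * plLow u S μ - mink u w * plLow p S μ
        + low w μ * ∑ ν, u ν * plLow p S ν := by
  have hdiag : ∀ μ, S μ μ = 0 := fun μ => by linarith [hS μ μ]
  fin_cases μ <;>
  simp [epsContract, plLow, up2, mink, low, eps4, sgnZ, Fin.sum_univ_four, hdiag,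
    hS 1 0, hS 2 0, hS 3 0, hS 2 1, hS 3 1, hS 3 2] <;> ring

theorem mul_boost_sub_plLow_eq_epsContract (S : Fin 4 → Fin 4 → ℝ)
    (hS : ∀ μ ν, S μ ν = -S ν μ) {P u : Fin 4 → ℝ} (hP : mink P P < 0)
    (hgap : mcOf P - mink u P ≠ 0) (hu : mink u u = -1) (μ : Fin 4) :
    (mcOf P - mink u P) *
        (low (fun κ => ∑ ν, boostMat P u κ ν * (low (plLow P S) ν / mcOf P)) μ - plLow u S μ)
      = epsContract u P (low fun κ => ∑ σ, S κ σ * (u σ + P σ / mcOf P)) μ := by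
  have hm : mcOf P ≠ 0 := (mcOf_pos hP).ne'
  have hboost : ∀ κ, ∑ ν, boostMat P u κ ν * (low (plLow P S) ν / mcOf P)
      = low (plLow P S) κ / mcOf P
        + (P κ / mcOf P + u κ) * (∑ ν, u ν * plLow P S ν) / (mcOf P - mink u P) := by
    intro κ
    have hPx : mink P (fun ν => low (plLow P S) ν / mcOf P) = 0 := by
      rw [← zero_div (mcOf P), ← sum_mul_plLow_self P S]
      simp only [mink, low, Fin.isValue, ↓reduceIte, one_ne_zero, Fin.reduceEq,
        Fin.sum_univ_four]
      ring
    have hux : mink u (fun ν => low (plLow P S) ν / mcOf P)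
        = (∑ ν, u ν * plLow P S ν) / mcOf P := by
      simp only [mink, low, Fin.isValue, ↓reduceIte, one_ne_zero, Fin.reduceEq,
        Fin.sum_univ_four]
      ring
    rw [boostMat_mulVec, hPx, hux, one_sub_div hm]
    field_simp
    ring
  have hPw : mink P (fun σ => u σ + P σ / mcOf P) = mink u P - mcOf P := by
    have : mink P (fun σ => u σ + P σ / mcOf P) = mink u P + mink P P / mcOf P := by
      simp only [mink]; ring
    rw [this, mink_self_eq_neg_mcOf_sq hP.le]
    field_simp
    ring
  have huw : mink u (fun σ => u σ + P σ / mcOf P) = -1 + mink u P / mcOf P := by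
    have : mink u (fun σ => u σ + P σ / mcOf P) = mink u u + mink u P / mcOf P := by
      simp only [mink]; ring
    rw [this, hu]
  rw [epsContract_low_interior S hS, hPw, huw]
  simp only [hboost]
  by_cases hμ : μ = 0 <;> simp only [low, hμ, ↓reduceIte] <;> field_simp <;> ring

/-- **Equivalent form of the centre-of-spin condition**: with `W_μ = −(1/2)ε_{μνρσ}P^νS^{ρσ}` and
`B(u)` the standard boost, the condition `η_{μν}(B(u)(W^♯/(mc)))^ν = −(1/2)ε_{μνρσ}u^νS^{ρσ}`
holds iff the 3-form `u^♭ ∧ P^♭ ∧ (ι_{u+P/(mc)}S)` vanishes. -/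
theorem centre_of_spin_condition_iff
    (P : Fin 4 → ℝ) (hP : FDTimelike P)
    (u : Fin 4 → ℝ) (hu : FDUnitTimelike u)
    (S : Fin 4 → Fin 4 → ℝ) (hS : ∀ μ ν, S μ ν = -S ν μ) :
    (∀ μ, low (fun κ => ∑ ν, boostMat P u κ ν * (low (plLow P S) ν / mcOf P)) μ
        = -(1/2) * ∑ ν, ∑ ρ, ∑ σ, eps4 μ ν ρ σ * u ν * up2 S ρ σ)
    ↔ (∀ μ ν ρ, alt3 (low u) (low P)
        (fun κ => ∑ σ, S κ σ * (u σ + P σ / mcOf P)) μ ν ρ = 0) := by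
  have hgap : 0 < mcOf P - mink u P :=
    sub_pos.mpr ((mcOf_pos hP.1).trans' (mink_neg_of_fdTimelike ⟨by linarith [hu.1], hu.2⟩ hP))
  have key := mul_boost_sub_plLow_eq_epsContract S hS hP.1 hgap.ne' hu.1
  rw [alt3_eq_zero_iff_epsContract_low_eq_zero, low_low, low_low, funext_iff]
  refine forall_congr' fun μ => ?_
  rw [← key μ, Pi.zero_apply, mul_eq_zero_iff_left hgap.ne', sub_eq_zero]
  rfl
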